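/- The Krivine machine simulates weak-head reduction: if v ↦ v' by one step of weak-head reduction, then for any co-term E, the command ⟨v | E⟩ reduces in one or more Krivine machine steps to a command c such that plug(⟨v|E⟩) ↦ plug(c), where plug(⟨v | v'·E⟩) = plug(⟨v v' | E⟩) and plug(⟨v | tp⟩) = v. -/
import Mathlib


/-- Untyped lambda terms with de Bruijn indices. -/
inductive Tm : Type
  | var : Nat → Tm
  | app : Tm → Tm → Tm
  | lam : Tm → Tm
deriving DecidableEq

/-- Shift free indices ≥ d up by one. -/
def lift (d : Nat) : Tm → Tm
  | .var n => if n < d then .var n else .var (n + 1)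
  | .app a b => .app (lift d a) (lift d b)
  | .lam a => .lam (lift (d + 1) a)

/-- Capture-avoiding substitution of `u` for index `k`. -/
def subst (u : Tm) (k : Nat) : Tm → Tm
  | .var n => if n = k then u else if k < n then .var (n - 1) else .var n
  | .app a b => .app (subst u k a) (subst u k b)
  | .lam a => .lam (subst (lift 0 u) (k + 1) a)

/-- Small-step weak-head (call-by-name) reduction: E[(λx.v)v'] ↦ E[v[v'/x]], E ::= □ | E v. -/
inductive Wh : Tm → Tm → Prop
  | beta (a b : Tm) : Wh (.app (.lam a) b) (subst b 0 a)
  | appL {a a' : Tm} (b : Tm) : Wh a a' → Wh (.app a b) (.app a' b)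

/-- Neutral terms N ::= x | N v. -/
inductive Neutral : Tm → Prop
  | var (n : Nat) : Neutral (.var n)
  | app {a : Tm} (b : Tm) : Neutral a → Neutral (.app a b)

/-- Weak-head normal forms: WHNF ::= N | λx.v. -/
inductive Whnf : Tm → Prop
  | neutral {a : Tm} : Neutral a → Whnf a
  | lam (a : Tm) : Whnf (.lam a)

/-- Head normal forms: HNF ::= N | λx.HNF. -/
inductive Hnf : Tm → Prop
  | neutral {a : Tm} : Neutral a → Hnf a
  | lam {a : Tm} : Hnf a → Hnf (.lam a)

/-- Small-step head reduction: S[(λx.v)v'] ↦ S[v[v'/x]], S ::= E | λx.S, E ::= □ | E v. -/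
inductive Hd : Tm → Tm → Prop
  | wh {a a' : Tm} : Wh a a' → Hd a a'
  | lam {a a' : Tm} : Hd a a' → Hd (.lam a) (.lam a')

/-- Full beta reduction (contraction in any context). -/
inductive Beta : Tm → Tm → Prop
  | beta (a b : Tm) : Beta (.app (.lam a) b) (subst b 0 a)
  | appL {a a' : Tm} (b : Tm) : Beta a a' → Beta (.app a b) (.app a' b)
  | appR {b b' : Tm} (a : Tm) : Beta b b' → Beta (.app a b) (.app a b')
  | lam {a a' : Tm} : Beta a a' → Beta (.lam a) (.lam a')

/-- Big-step weak-head evaluation. -/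
inductive BigWh : Tm → Tm → Prop
  | var (n : Nat) : BigWh (.var n) (.var n)
  | lam (a : Tm) : BigWh (.lam a) (.lam a)
  | beta {a a' b v : Tm} : BigWh a (.lam a') → BigWh (subst b 0 a') v → BigWh (.app a b) v
  | neu {a a' : Tm} (b : Tm) : BigWh a a' → (∀ t, a' ≠ .lam t) → BigWh (.app a b) (.app a' b)

/-- Big-step head evaluation, derived from weak-head evaluation. -/
inductive BigH : Tm → Tm → Prop
  | lam {v a a' : Tm} : BigWh v (.lam a) → BigH a a' → BigH v (.lam a')
  | notlam {v v' : Tm} : BigWh v v' → (∀ t, v' ≠ .lam t) → BigH v v'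

/-- Sestoft's big-step semantics for head reduction. -/
inductive Sf : Tm → Tm → Prop
  | var (n : Nat) : Sf (.var n) (.var n)
  | lam {a a' : Tm} : Sf a a' → Sf (.lam a) (.lam a')
  | neu {a a' : Tm} (b : Tm) : BigWh a a' → (∀ t, a' ≠ .lam t) → Sf (.app a b) (.app a' b)
  | beta {a a' b v : Tm} : BigWh a (.lam a') → Sf (subst b 0 a') v → Sf (.app a b) v

/-- Krivine machine: co-terms are lists of terms ([] = tp, (· :: ·) = call stack push). -/
abbrev KCmd := Tm × List Tm

/-- Krivine machine steps. -/
inductive KStep : KCmd → KCmd → Prop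
  | push (a b : Tm) (E : List Tm) : KStep (.app a b, E) (a, b :: E)
  | grab (a b : Tm) (E : List Tm) : KStep (.lam a, b :: E) (subst b 0 a, E)

/-- Readback/plugging of a Krivine command: plug⟨v | v'·E⟩ = plug⟨v v' | E⟩, plug⟨v | tp⟩ = v. -/
def plug : Tm → List Tm → Tm
  | v, [] => v
  | v, b :: E => plug (.app v b) E

/-- n-fold lambda abstraction: nLam n v = λ…λ.v with n lambdas. -/
def nLam : Nat → Tm → Tm
  | 0, v => v
  | n + 1, v => .lam (nLam n v)

/-- Co-terms of the head reduction abstract machine: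
`stuck n` is n-fold Abs applied to tp, `cons` pushes an argument. -/
inductive HCo : Type
  | stuck : Nat → HCo
  | cons : Tm → HCo → HCo

abbrev HCmd := Tm × HCo

/-- Head reduction abstract machine steps. -/
inductive HStep : HCmd → HCmd → Prop
  | push (a b : Tm) (E : HCo) : HStep (.app a b, E) (a, .cons b E)
  | grab (a b : Tm) (E : HCo) : HStep (.lam a, .cons b E) (subst b 0 a, E)
  | under (a : Tm) (n : Nat) : HStep (.lam a, .stuck n) (a, .stuck (n + 1))

/-- Readback of the head machine: ⟨v | v'·E⟩ ⇝ ⟨v v' | E⟩, ⟨v | Abs S⟩ ⇝ ⟨λ.v | S⟩, ⟨v | tp⟩ ⇝ v. -/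
def hread : Tm → HCo → Tm
  | v, .stuck n => nLam n v
  | v, .cons b E => hread (.app v b) E

/-- One readback step on head-machine commands. -/
inductive RStep : HCmd → HCmd → Prop
  | cons (v b : Tm) (E : HCo) : RStep (v, .cons b E) (.app v b, E)
  | abs (v : Tm) (n : Nat) : RStep (v, .stuck (n + 1)) (.lam v, .stuck n)

/-- Chains of exactly n readback steps. -/
inductive RStepN : Nat → HCmd → HCmd → Prop
  | refl (c : HCmd) : RStepN 0 c c
  | step {n : Nat} {c c' c'' : HCmd} : RStep c c' → RStepN n c' c'' → RStepN (n + 1) c c''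

/-- Length of a head-machine co-term: constructors above tp. -/
def colen : HCo → Nat
  | .stuck n => n
  | .cons _ E => colen E + 1

/-- All free indices are below k. -/
def ClosedUnder : Nat → Tm → Prop
  | k, .var n => n < k
  | k, .app a b => ClosedUnder k a ∧ ClosedUnder k b
  | k, .lam a => ClosedUnder (k + 1) a

/-- Eta-expansion relation: t is the eta-expansion of f. -/
def EtaExp (t f : Tm) : Prop := t = .lam (.app (lift 0 f) (.var 0))


theorem wh_plug {t t' : Tm} (h : Wh t t') : ∀ E : List Tm, Wh (plug t E) (plug t' E) := by
  intro E
  induction E generalizing t t' with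
  | nil => exact h
  | cons b E ih => exact ih (Wh.appL b h)

theorem krivine_simulates_wh (v v' : Tm) (h : Wh v v') (E : List Tm) :
    ∃ c : KCmd, Relation.TransGen KStep (v, E) c ∧ Wh (plug v E) (plug c.1 c.2) := by
  induction h generalizing E with
  | beta a b =>
    exact ⟨(subst b 0 a, E),
      Relation.TransGen.head (KStep.push _ _ _) (Relation.TransGen.single (KStep.grab _ _ _)),
      wh_plug (Wh.beta a b) E⟩
  | appL b ha ih =>
    obtain ⟨c, hc, hw⟩ := ih (b :: E)
    exact ⟨c, Relation.TransGen.head (KStep.push _ _ _) hc, hw⟩
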